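/- arXiv:2411.02881 — 2 statements merged into one kernel-verified Lean document; each statement's English description precedes it below -/
import Mathlib

section
/- Let N, d be natural numbers and let U_1, …, U_N be unitary d×d complex matrices. Define the Feynman clock Hamiltonian H_U on ℂ^{N+1} ⊗ ℂ^d by H_U = Σ_{j=1}^{N} √(j(N−j+1)) (E_{j,j-1} ⊗ U_j + E_{j-1,j} ⊗ U_j†), where E_{j,k} denotes the (N+1)×(N+1) matrix unit. Then H_U is Hermitian, and for every vector ψ ∈ ℂ^d, exp(−i(π/2)·H_U)(e_0 ⊗ ψ) = (−i)^N · e_N ⊗ (U_N ⋯ U_2 U_1 ψ), where e_0 and e_N are the first and last standard basis vectors of ℂ^{N+1}. -/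
open Matrix Kronecker

/-!
Let `W_k = U_k ⋯ U_1` and let `V = ∑_k E_{k,k} ⊗ W_k`. Since `W_{j+1} W_j† = U_j`, the unitary `V`
conjugates `A ⊗ 1` to `H_U`, where `A` is the clock Hamiltonian of the identity gates
(`2 J_x` in the spin-`N/2` representation). Hence
`exp(-i(π/2) H_U) = V (exp(-i(π/2) A) ⊗ 1) V†`, and it remains to evolve `e_0` under `A`.
The curve `φ_k(z) = √(N choose k) cos(z)^(N-k) (-i sin z)^k` solves `φ' = -i A φ` with
`φ(0) = e_0`, so `exp(-izA) e_0 = φ(z)`, and `φ(π/2) = (-i)^N e_N`.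
-/

/-- The Feynman clock Hamiltonian `H_U = Σ_{j=1}^{N} √(j(N−j+1)) (E_{j,j-1} ⊗ U_j +
E_{j-1,j} ⊗ U_j†)` on `ℂ^{N+1} ⊗ ℂ^d` (here indexed by `j : Fin N`, representing `j+1`,
so `U j` is the `(j+1)`-st gate). -/
noncomputable def clockHam (N d : ℕ) (U : Fin N → Matrix (Fin d) (Fin d) ℂ) :
    Matrix (Fin (N + 1) × Fin d) (Fin (N + 1) × Fin d) ℂ :=
  ∑ j : Fin N, (Real.sqrt ((((j : ℕ) + 1) * (N - (j : ℕ)) : ℕ)) : ℂ) •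
    ((Matrix.single j.succ j.castSucc (1 : ℂ)) ⊗ₖ U j +
      (Matrix.single j.castSucc j.succ (1 : ℂ)) ⊗ₖ (U j)ᴴ)

/-- The Kronecker (tensor) product of two vectors. -/
def vecKron {m d : Type*} (v : m → ℂ) (w : d → ℂ) : m × d → ℂ :=
  fun p => v p.1 * w p.2

theorem Real.sqrt_mul_mul_sqrt_of_mul_eq {p q x y : ℝ} (hp : 0 ≤ p) (hq : 0 ≤ q)
    (h : x * p = y * q) : √(p * q) * √x = q * √y := by
  rw [← Real.sqrt_mul (by positivity), show p * q * x = (q * q) * y by linear_combination q * h,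
    Real.sqrt_mul (mul_self_nonneg q), Real.sqrt_mul_self hq]

noncomputable def clockCoeff (N k : ℕ) : ℝ := √(((k + 1) * (N - k) : ℕ) : ℝ)

theorem clockCoeff_mul_sqrt_choose_succ (N k : ℕ) :
    clockCoeff N k * √(N.choose (k + 1) : ℝ) = (N - k : ℕ) * √(N.choose k : ℝ) := by
  rw [clockCoeff, Nat.cast_mul]
  exact Real.sqrt_mul_mul_sqrt_of_mul_eq (by positivity) (by positivity)
    (by exact_mod_cast Nat.choose_succ_right_eq N k)

theorem clockCoeff_mul_sqrt_choose (N k : ℕ) :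
    clockCoeff N k * √(N.choose k : ℝ) = (k + 1 : ℕ) * √(N.choose (k + 1) : ℝ) := by
  rw [clockCoeff, Nat.cast_mul, mul_comm ((k + 1 : ℕ) : ℝ)]
  exact Real.sqrt_mul_mul_sqrt_of_mul_eq (by positivity) (by positivity)
    (by exact_mod_cast (Nat.choose_succ_right_eq N k).symm)

noncomputable def clockMatrix (N : ℕ) : Matrix (Fin (N + 1)) (Fin (N + 1)) ℂ :=
  ∑ j : Fin N, (clockCoeff N j : ℂ) •
    (single j.succ j.castSucc (1 : ℂ) + single j.castSucc j.succ (1 : ℂ))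

-- `√(k(N+1-k))` is `clockCoeff N (k-1)` for `k ≥ 1` and vanishes at `k = 0`, where the
-- junk value `f (0 - 1)` appears.
theorem clockMatrix_mulVec_apply (N : ℕ) (f : ℕ → ℂ) (k : Fin (N + 1)) :
    (clockMatrix N *ᵥ fun j => f j) k =
      (√((k * (N + 1 - k) : ℕ) : ℝ) : ℂ) * f (k - 1) + (clockCoeff N k : ℂ) * f (k + 1) := by
  simp only [clockMatrix, sum_mulVec, smul_mulVec, add_mulVec, single_mulVec, one_mul,
    Finset.sum_apply, Pi.smul_apply, Pi.add_apply, Function.update_apply, Pi.zero_apply,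
    smul_eq_mul, mul_add, Finset.sum_add_distrib, mul_ite, mul_zero]
  congr 1
  · induction k using Fin.cases with
    | zero =>
      rw [Finset.sum_eq_zero fun j _ => if_neg (Fin.succ_ne_zero j).symm]
      simp
    | succ i => simp [clockCoeff, Nat.add_sub_add_right]
  · induction k using Fin.lastCases with
    | last =>
      rw [Finset.sum_eq_zero fun j _ => if_neg (Fin.castSucc_lt_last j).ne']
      simp [clockCoeff]
    | cast i => simp

section ClockState

open Complex

theorem hasDerivAt_cos_pow_mul_neg_I_mul_sin_pow (p q : ℕ) (z : ℂ) :
    HasDerivAt (fun z => cos z ^ p * (-I * sin z) ^ q)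
      (-I * (p * cos z ^ (p - 1) * (-I * sin z) ^ (q + 1) +
        q * cos z ^ (p + 1) * (-I * sin z) ^ (q - 1))) z := by
  refine (((hasDerivAt_cos z).fun_pow p).mul
    (((hasDerivAt_sin z).const_mul (-I)).fun_pow q)).congr_deriv ?_
  linear_combination -(p * cos z ^ (p - 1) * sin z * (-I * sin z) ^ q) * I_sq

/-- The `k`-th amplitude of `exp(-izA) e₀`, where `A = clockMatrix N`. -/
noncomputable def clockState (N : ℕ) (z : ℂ) (k : ℕ) : ℂ :=
  √(N.choose k : ℝ) * (cos z ^ (N - k) * (-I * sin z) ^ k)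

theorem hasDerivAt_clockState {N k : ℕ} (hk : k ≤ N) (z : ℂ) :
    HasDerivAt (fun z => clockState N z k)
      (-I * ((√((k * (N + 1 - k) : ℕ) : ℝ) : ℂ) * clockState N z (k - 1) +
        (clockCoeff N k : ℂ) * clockState N z (k + 1))) z := by
  refine ((hasDerivAt_cos_pow_mul_neg_I_mul_sin_pow (N - k) k z).const_mul _).congr_deriv ?_
  have hb := congrArg ((↑) : ℝ → ℂ) (clockCoeff_mul_sqrt_choose_succ N k)
  push_cast at hb
  simp only [clockState, Nat.sub_sub]
  rcases k with _ | k
  · simp only [zero_mul, Nat.cast_zero, Real.sqrt_zero, ofReal_zero]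
    linear_combination (I * cos z ^ (N - (0 + 1)) * (-I * sin z) ^ (0 + 1)) * hb
  · have ha := congrArg ((↑) : ℝ → ℂ) (clockCoeff_mul_sqrt_choose N k)
    rw [show N + 1 - (k + 1) = N - k by omega, show N - (k + 1) + 1 = N - k by omega,
      Nat.add_sub_cancel, ← clockCoeff]
    push_cast at ha ⊢
    linear_combination (I * (cos z ^ (N - k) * (-I * sin z) ^ k)) * ha
      + (I * (cos z ^ (N - (k + 2)) * (-I * sin z) ^ (k + 2))) * hb

theorem clockState_zero (N : ℕ) : (fun k : Fin (N + 1) => clockState N 0 k) = Pi.single 0 1 := by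
  ext k
  induction k using Fin.cases with
  | zero => simp [clockState]
  | succ k => simp [clockState]

theorem clockState_pi_div_two (N : ℕ) :
    (fun k : Fin (N + 1) => clockState N ((Real.pi / 2 : ℝ) : ℂ) k) =
      (-I) ^ N • Pi.single (Fin.last N) 1 := by
  ext k
  induction k using Fin.lastCases with
  | last => simp [clockState]
  | cast k => simp [clockState, (Fin.castSucc_lt_last k).ne, Nat.sub_eq_zero_iff_le]

end ClockState

theorem Matrix.eq_exp_smul_mulVec_of_hasDerivAt {𝕜 n : Type*} [RCLike 𝕜] [Fintype n]
    [DecidableEq n] (X : Matrix n n 𝕜) {v : 𝕜 → n → 𝕜} (hv : ∀ z, HasDerivAt v (X *ᵥ v z) z)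
    (z : 𝕜) : v z = NormedSpace.exp (z • X) *ᵥ v 0 := by
  open scoped Norms.Operator in
  let B : Matrix n n 𝕜 →L[𝕜] (n → 𝕜) →L[𝕜] n → 𝕜 := LinearMap.toContinuousLinearMap
    (LinearMap.toContinuousLinearMap.toLinearMap ∘ₗ mulVecBilin 𝕜 𝕜)
  have hconst : ∀ w, HasDerivAt (fun w => NormedSpace.exp ((-w) • X) *ᵥ v w) 0 w := by
    intro w
    have hexp := (hasDerivAt_exp_smul_const X (-w)).scomp w (hasDerivAt_neg w)
    refine (B.hasDerivAt_of_bilinear (fun _ => hexp) (fun _ => hv w)).congr_deriv ?_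
    show NormedSpace.exp ((-w) • X) *ᵥ (X *ᵥ v w) +
      ((-1 : 𝕜) • (NormedSpace.exp ((-w) • X) * X)) *ᵥ v w = 0
    rw [mulVec_mulVec, neg_one_smul, neg_mulVec, add_neg_cancel]
  have hv0 : NormedSpace.exp ((-z) • X) *ᵥ v z = v 0 := by
    simpa using is_const_of_deriv_eq_zero (fun w => (hconst w).differentiableAt)
      (fun w => (hconst w).deriv) z 0
  rw [← hv0, mulVec_mulVec,
    ← Matrix.exp_add_of_commute _ _ ((Commute.refl X).smul_left _ |>.smul_right _), ← add_smul,
    add_neg_cancel, zero_smul, NormedSpace.exp_zero, one_mulVec]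

theorem exp_clockMatrix_mulVec_single_zero (N : ℕ) (z : ℂ) :
    NormedSpace.exp ((-Complex.I * z) • clockMatrix N) *ᵥ Pi.single 0 1 =
      fun k : Fin (N + 1) => clockState N z k := by
  have hode : ∀ z, HasDerivAt (fun z => fun k : Fin (N + 1) => clockState N z k)
      ((-Complex.I • clockMatrix N) *ᵥ fun k : Fin (N + 1) => clockState N z k) z := fun z =>
    hasDerivAt_pi.2 fun k => by
      rw [smul_mulVec, Pi.smul_apply, clockMatrix_mulVec_apply, smul_eq_mul]
      exact hasDerivAt_clockState k.is_le z
  rw [eq_exp_smul_mulVec_of_hasDerivAt _ hode z, clockState_zero, smul_smul, mul_comm]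

theorem Matrix.sum_kronecker {ι l m n p α : Type*} [NonUnitalNonAssocSemiring α] (s : Finset ι)
    (A : ι → Matrix l m α) (B : Matrix n p α) : (∑ i ∈ s, A i) ⊗ₖ B = ∑ i ∈ s, A i ⊗ₖ B := by
  ext
  simp [Matrix.sum_apply, Finset.sum_mul]

theorem Matrix.exp_kronecker_one {𝕜 m n : Type*} [RCLike 𝕜] [Fintype m] [DecidableEq m]
    [Fintype n] [DecidableEq n] (A : Matrix m m 𝕜) :
    NormedSpace.exp (A ⊗ₖ (1 : Matrix n n 𝕜)) = NormedSpace.exp A ⊗ₖ (1 : Matrix n n 𝕜) := by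
  open scoped Norms.Operator in
  rw [kronecker_one, kronecker_one]
  exact (NormedSpace.map_exp ((blockDiagonalRingHom m n 𝕜).comp (Pi.constRingHom n _))
    (continuous_id.matrix_blockDiagonal.comp (continuous_pi fun _ => continuous_id)) A).symm

theorem Matrix.exp_unitary_conj {𝕜 m : Type*} [RCLike 𝕜] [Fintype m] [DecidableEq m]
    {V : Matrix m m 𝕜} (hV : V ∈ unitaryGroup m 𝕜) (A : Matrix m m 𝕜) :
    NormedSpace.exp (V * A * Vᴴ) = V * NormedSpace.exp A * Vᴴ := by
  have hinv : V⁻¹ = Vᴴ := inv_eq_right_inv (mem_unitaryGroup_iff.1 hV)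
  rw [← hinv]
  exact exp_conj V A (Unitary.isUnit_coe (U := ⟨V, hV⟩))

theorem kronecker_mulVec_vecKron {l m n p : Type*} [Fintype m] [Fintype p] (A : Matrix l m ℂ)
    (B : Matrix n p ℂ) (v : m → ℂ) (w : p → ℂ) :
    (A ⊗ₖ B) *ᵥ vecKron v w = vecKron (A *ᵥ v) (B *ᵥ w) := by
  ext ⟨i, k⟩
  simp only [mulVec, dotProduct, vecKron, Fintype.sum_prod_type, kroneckerMap_apply,
    Finset.sum_mul_sum]
  exact Finset.sum_congr rfl fun _ _ => Finset.sum_congr rfl fun _ _ => by ring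

theorem vecKron_smul {m n : Type*} (c : ℂ) (v : m → ℂ) (w : n → ℂ) :
    vecKron (c • v) w = c • vecKron v w := by
  ext
  simp [vecKron, mul_assoc]

def prefixProd {M : Type*} [Monoid M] {N : ℕ} (U : Fin N → M) (k : ℕ) : M :=
  ((List.ofFn U).take k).reverse.prod

section PrefixProd

variable {M : Type*} [Monoid M] {N : ℕ} (U : Fin N → M)

@[simp]
theorem prefixProd_zero : prefixProd U 0 = 1 := by
  simp [prefixProd]

theorem prefixProd_succ (j : Fin N) : prefixProd U (j + 1) = U j * prefixProd U j := by
  simp [prefixProd, List.take_add_one]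

theorem prefixProd_self : prefixProd U N = (List.ofFn U).reverse.prod := by
  rw [prefixProd, List.take_of_length_le (by simp)]

theorem prefixProd_mem {S : Submonoid M} (hU : ∀ j, U j ∈ S) (k : ℕ) : prefixProd U k ∈ S :=
  S.list_prod_mem fun x hx => by
    obtain ⟨j, rfl⟩ := List.mem_ofFn.1 (List.mem_of_mem_take (List.mem_reverse.1 hx))
    exact hU j

end PrefixProd

section Multiplexor

variable {n m R : Type*} [Fintype n] [DecidableEq n]

/-- The uniformly controlled gate: it applies `W k` when the control register is in state `k`. -/
def multiplexor [CommSemiring R] (W : n → Matrix m m R) : Matrix (n × m) (n × m) R :=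
  ∑ k, single k k 1 ⊗ₖ W k

section CommSemiring

variable [CommSemiring R] (W : n → Matrix m m R)

theorem multiplexor_mul_single_kronecker [Fintype m] (a b : n) (M : Matrix m m R) :
    multiplexor W * (single a b 1 ⊗ₖ M) = single a b 1 ⊗ₖ (W a * M) := by
  rw [multiplexor, Finset.sum_mul, Finset.sum_eq_single a]
  · rw [← mul_kronecker_mul, single_mul_single_same, one_mul]
  · intro k _ hk
    rw [← mul_kronecker_mul, single_mul_single_of_ne (h := hk), zero_kronecker]
  · simp

theorem single_kronecker_mul_multiplexor [Fintype m] (a b : n) (M : Matrix m m R) :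
    (single a b 1 ⊗ₖ M) * multiplexor W = single a b 1 ⊗ₖ (M * W b) := by
  rw [multiplexor, Finset.mul_sum, Finset.sum_eq_single b]
  · rw [← mul_kronecker_mul, single_mul_single_same, one_mul]
  · intro k _ hk
    rw [← mul_kronecker_mul, single_mul_single_of_ne (h := Ne.symm hk), zero_kronecker]
  · simp

theorem multiplexor_one [DecidableEq m] : multiplexor (fun _ : n => (1 : Matrix m m R)) = 1 := by
  rw [multiplexor, ← sum_kronecker, sum_single_one, one_kronecker_one]

theorem conjTranspose_multiplexor [StarRing R] :
    (multiplexor W)ᴴ = multiplexor fun k => (W k)ᴴ := by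
  simp [multiplexor, conjTranspose_sum, conjTranspose_kronecker]

theorem multiplexor_mul_single_kronecker_mul_conjTranspose [Fintype m] [StarRing R] (a b : n)
    (M : Matrix m m R) :
    multiplexor W * (single a b 1 ⊗ₖ M) * (multiplexor W)ᴴ =
      single a b 1 ⊗ₖ (W a * M * (W b)ᴴ) := by
  rw [multiplexor_mul_single_kronecker, conjTranspose_multiplexor,
    single_kronecker_mul_multiplexor]

end CommSemiring

theorem multiplexor_mem_unitaryGroup [Fintype m] [DecidableEq m] [CommRing R] [StarRing R]
    {W : n → Matrix m m R} (hW : ∀ k, W k ∈ unitaryGroup m R) :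
    multiplexor W ∈ unitaryGroup (n × m) R := by
  rw [mem_unitaryGroup_iff, star_eq_conjTranspose, conjTranspose_multiplexor]
  conv_lhs => rw [multiplexor]
  simp_rw [Finset.sum_mul, single_kronecker_mul_multiplexor, ← star_eq_conjTranspose,
    mem_unitaryGroup_iff.1 (hW _)]
  exact multiplexor_one

theorem multiplexor_mulVec_vecKron_single [Fintype m] (W : n → Matrix m m ℂ) (a : n)
    (ψ : m → ℂ) :
    multiplexor W *ᵥ vecKron (Pi.single a 1) ψ = vecKron (Pi.single a 1) (W a *ᵥ ψ) := by
  rw [multiplexor, sum_mulVec, Finset.sum_eq_single a]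
  · rw [kronecker_mulVec_vecKron, single_mulVec_eq, Pi.single_eq_same, one_mul, one_smul]
  · intro k _ hk
    rw [kronecker_mulVec_vecKron, single_mulVec_eq, Pi.single_eq_of_ne hk, mul_zero, zero_smul]
    ext
    simp [vecKron]
  · simp

end Multiplexor

theorem clockHam_isHermitian (N d : ℕ) (U : Fin N → Matrix (Fin d) (Fin d) ℂ) :
    (clockHam N d U).IsHermitian := by
  rw [IsHermitian, clockHam, conjTranspose_sum]
  refine Finset.sum_congr rfl fun j _ => ?_
  rw [conjTranspose_smul, conjTranspose_add, conjTranspose_kronecker, conjTranspose_kronecker,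
    conjTranspose_single, conjTranspose_single, conjTranspose_conjTranspose, star_one,
    Complex.star_def, Complex.conj_ofReal]
  exact congrArg _ (add_comm _ _)

theorem clockHam_eq_multiplexor_conj {N d : ℕ} (U : Fin N → Matrix (Fin d) (Fin d) ℂ)
    (hU : ∀ j, U j ∈ unitaryGroup (Fin d) ℂ) :
    clockHam N d U = multiplexor (fun k : Fin (N + 1) => prefixProd U k) *
      (clockMatrix N ⊗ₖ (1 : Matrix (Fin d) (Fin d) ℂ)) *
        (multiplexor fun k : Fin (N + 1) => prefixProd U k)ᴴ := by
  have hW (k : ℕ) : prefixProd U k * (prefixProd U k)ᴴ = 1 :=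
    mem_unitaryGroup_iff.1 (prefixProd_mem U hU k)
  rw [clockMatrix, sum_kronecker, Finset.mul_sum, Finset.sum_mul, clockHam]
  refine Finset.sum_congr rfl fun j _ => ?_
  rw [smul_kronecker, add_kronecker, mul_smul_comm, smul_mul_assoc, Matrix.mul_add,
    Matrix.add_mul,
    multiplexor_mul_single_kronecker_mul_conjTranspose,
    multiplexor_mul_single_kronecker_mul_conjTranspose, Fin.val_succ, Fin.val_castSucc,
    prefixProd_succ, mul_one, mul_one, conjTranspose_mul, mul_assoc, hW, ← mul_assoc, hW,
    mul_one, one_mul]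
  rfl

/-- The Feynman clock Hamiltonian of unitaries `U_1, …, U_N` is Hermitian and its dynamics
at time `π/2` perfectly transfers `e₀ ⊗ ψ` to `(−i)^N · e_N ⊗ (U_N ⋯ U_2 U_1 ψ)`. -/
theorem feynman_clock_evolution (N d : ℕ) (U : Fin N → Matrix (Fin d) (Fin d) ℂ)
    (hU : ∀ j, U j ∈ Matrix.unitaryGroup (Fin d) ℂ) :
    (clockHam N d U).IsHermitian ∧
      ∀ ψ : Fin d → ℂ,
        (NormedSpace.exp ((-Complex.I * ((Real.pi / 2 : ℝ) : ℂ)) • clockHam N d U)) *ᵥ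
            vecKron (Pi.single (0 : Fin (N + 1)) 1) ψ =
          (-Complex.I) ^ N •
            vecKron (Pi.single (Fin.last N) 1) ((List.ofFn U).reverse.prod *ᵥ ψ) := by
  refine ⟨clockHam_isHermitian N d U, fun ψ => ?_⟩
  set V := multiplexor fun k : Fin (N + 1) => prefixProd U k
  have hV : V ∈ unitaryGroup _ ℂ := multiplexor_mem_unitaryGroup fun k => prefixProd_mem U hU k
  have hVψ : Vᴴ *ᵥ vecKron (Pi.single 0 1) ψ = vecKron (Pi.single 0 1) ψ := by
    rw [conjTranspose_multiplexor, multiplexor_mulVec_vecKron_single]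
    simp
  have hexp (c : ℂ) : NormedSpace.exp (c • clockHam N d U) =
      V * (NormedSpace.exp (c • clockMatrix N) ⊗ₖ (1 : Matrix (Fin d) (Fin d) ℂ)) * Vᴴ := by
    rw [clockHam_eq_multiplexor_conj U hU, ← smul_mul_assoc, ← mul_smul_comm,
      exp_unitary_conj hV, ← smul_kronecker, exp_kronecker_one]
  rw [hexp, ← mulVec_mulVec, ← mulVec_mulVec, hVψ, kronecker_mulVec_vecKron, one_mulVec,
    exp_clockMatrix_mulVec_single_zero, clockState_pi_div_two, vecKron_smul, mulVec_smul,
    multiplexor_mulVec_vecKron_single, Fin.val_last, prefixProd_self]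
end

section
/- Let Γ ≥ 0, let ℂ^{d_0}, …, ℂ^{d_Γ} be finite-dimensional spaces with d_γ ≥ 1, let R_γ = 2E_{0,0} − I on ℂ^{d_γ}, and for φ ∈ [0, π/2] let R = I − (1 − e^{−iφ}) (E_{0,0} ⊗ ⋯ ⊗ E_{0,0}) on ℂ^{d_0} ⊗ ⋯ ⊗ ℂ^{d_Γ}. Introduce ancilla qubits: one control qubit with prepared state u = (|0⟩ + √(2 sin(φ/2)) |1⟩)/√(1 + 2 sin(φ/2)), and Γ+1 qubits each with prepared state |+⟩ = (|0⟩+|1⟩)/√2. Let U_φ = |0⟩⟨0| + e^{i(3π/2 − φ/2)} |1⟩⟨1| act on the control qubit (tensored with identity elsewhere), and let select(U_R) = |0⟩⟨0|_{c} ⊗ I + |1⟩⟨1|_{c} ⊗ ⨂_{γ=0}^{Γ} (|0⟩⟨0|_{γ} ⊗ I_{d_γ} + |1⟩⟨1|_{γ} ⊗ R_γ), where the subscript c refers to the control qubit and subscript γ to the γ-th ancilla qubit paired with ℂ^{d_γ}. Then ((u ⊗ |+⟩^{⊗(Γ+1)})† ⊗ I) · select(U_R) · U_φ · ((u ⊗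 |+⟩^{⊗(Γ+1)}) ⊗ I) = R/(1 + 2 sin(φ/2)); that is, the distributed reflection R is block-encoded with normalization 1 + 2 sin(φ/2). -/
open Matrix Kronecker

/-- The isometry `(v ⊗ I_d) : ℂ^d → ℂ^m ⊗ ℂ^d`, `ψ ↦ v ⊗ ψ`, as a matrix. -/
def embedVec {m d : Type*} [DecidableEq d] (v : m → ℂ) : Matrix (m × d) d ℂ :=
  Matrix.of fun p b => v p.1 * (if p.2 = b then 1 else 0)

/-- The distributed reflection `R = I − (1 − e^{−iφ}) (E_{0,0} ⊗ ⋯ ⊗ E_{0,0})` on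
`ℂ^{d_0} ⊗ ⋯ ⊗ ℂ^{d_Γ}`. -/
noncomputable def dRefl (Γ : ℕ) (d : Fin (Γ + 1) → ℕ) (hd : ∀ γ, 0 < d γ) (φ : ℝ) :
    Matrix (∀ γ, Fin (d γ)) (∀ γ, Fin (d γ)) ℂ :=
  1 - (1 - Complex.exp (-Complex.I * (φ : ℂ))) •
    Matrix.single (fun γ => (⟨0, hd γ⟩ : Fin (d γ)))
      (fun γ => (⟨0, hd γ⟩ : Fin (d γ))) (1 : ℂ)

/-- The local reflection `R_γ = 2E_{0,0} − I` on `ℂ^{d_γ}`. -/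
def locRefl (Γ : ℕ) (d : Fin (Γ + 1) → ℕ) (hd : ∀ γ, 0 < d γ) (γ : Fin (Γ + 1)) :
    Matrix (Fin (d γ)) (Fin (d γ)) ℂ :=
  (2 : ℂ) • Matrix.single (⟨0, hd γ⟩ : Fin (d γ)) (⟨0, hd γ⟩ : Fin (d γ)) 1 - 1

/-- `⨂_{γ=0}^{Γ} (|0⟩⟨0|_γ ⊗ I_{d_γ} + |1⟩⟨1|_γ ⊗ R_γ)`, the locally controlled
reflections on the ancilla qubits paired with the node spaces. -/
noncomputable def ctrlLocRefl (Γ : ℕ) (d : Fin (Γ + 1) → ℕ) (hd : ∀ γ, 0 < d γ) :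
    Matrix ((Fin (Γ + 1) → Bool) × (∀ γ, Fin (d γ)))
      ((Fin (Γ + 1) → Bool) × (∀ γ, Fin (d γ))) ℂ :=
  Matrix.of fun p q =>
    ∏ γ : Fin (Γ + 1),
      ((if p.1 γ = q.1 γ then (1 : ℂ) else 0) *
        (if p.1 γ then locRefl Γ d hd γ (p.2 γ) (q.2 γ)
          else if p.2 γ = q.2 γ then 1 else 0))

/-- `select(U_R) = |0⟩⟨0|_c ⊗ I + |1⟩⟨1|_c ⊗ ⨂_γ (|0⟩⟨0|_γ ⊗ I_{d_γ} + |1⟩⟨1|_γ ⊗ R_γ)`. -/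
noncomputable def dReflSelect (Γ : ℕ) (d : Fin (Γ + 1) → ℕ) (hd : ∀ γ, 0 < d γ) :
    Matrix (Bool × ((Fin (Γ + 1) → Bool) × (∀ γ, Fin (d γ))))
      (Bool × ((Fin (Γ + 1) → Bool) × (∀ γ, Fin (d γ)))) ℂ :=
  (Matrix.single false false (1 : ℂ)) ⊗ₖ
      (1 : Matrix ((Fin (Γ + 1) → Bool) × (∀ γ, Fin (d γ)))
        ((Fin (Γ + 1) → Bool) × (∀ γ, Fin (d γ))) ℂ) +
    (Matrix.single true true (1 : ℂ)) ⊗ₖ ctrlLocRefl Γ d hd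

/-- The phase gate `U_φ = |0⟩⟨0| + e^{i(3π/2 − φ/2)}|1⟩⟨1|` on the control qubit,
tensored with the identity elsewhere. -/
noncomputable def phaseGate (Γ : ℕ) (d : Fin (Γ + 1) → ℕ) (φ : ℝ) :
    Matrix (Bool × ((Fin (Γ + 1) → Bool) × (∀ γ, Fin (d γ))))
      (Bool × ((Fin (Γ + 1) → Bool) × (∀ γ, Fin (d γ)))) ℂ :=
  (Matrix.of fun c c' : Bool =>
      if c = c' then
        (if c then Complex.exp (Complex.I * ((3 * Real.pi / 2 - φ / 2 : ℝ) : ℂ)) else 1)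
      else 0) ⊗ₖ
    (1 : Matrix ((Fin (Γ + 1) → Bool) × (∀ γ, Fin (d γ)))
      ((Fin (Γ + 1) → Bool) × (∀ γ, Fin (d γ))) ℂ)

/-- The prepared control-qubit state `u = (|0⟩ + √(2 sin(φ/2)) |1⟩)/√(1 + 2 sin(φ/2))`. -/
noncomputable def ctrlQubitState (φ : ℝ) : Bool → ℂ :=
  fun c => if c then
      ((Real.sqrt (2 * Real.sin (φ / 2)) / Real.sqrt (1 + 2 * Real.sin (φ / 2)) : ℝ) : ℂ)
    else (((Real.sqrt (1 + 2 * Real.sin (φ / 2)))⁻¹ : ℝ) : ℂ)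

/-- The state `|+⟩^{⊗(Γ+1)}` on the `Γ+1` ancilla qubits. -/
noncomputable def plusState (Γ : ℕ) : (Fin (Γ + 1) → Bool) → ℂ :=
  fun _ => (((Real.sqrt 2)⁻¹ ^ (Γ + 1) : ℝ) : ℂ)

/-! Compressing by the control state `u` turns `select(U_R) · U_φ` into
`(I + 2 sin(φ/2) e^{i(3π/2 − φ/2)} C) / (1 + 2 sin(φ/2))`, where `C` is the product of the
locally controlled reflections, and the phase of `U_φ` is chosen so that
`2 sin(φ/2) e^{i(3π/2 − φ/2)} = e^{−iφ} − 1`. Compressing `C` by `|+⟩^{⊗(Γ+1)}` averages the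
`2^{Γ+1}` operators `⨂_γ R_γ^{s_γ}`; this average factors as `⨂_γ (I + R_γ)/2 = ⨂_γ E_{0,0}`.
So the block is `(I + (e^{−iφ} − 1) ⨂_γ E_{0,0}) / (1 + 2 sin(φ/2)) = R / (1 + 2 sin(φ/2))`. -/

section Compression

variable {m d : Type*} [Fintype m] [Fintype d] [DecidableEq d]

-- Both factors need `(d := d)`: with `d` left to unification, the product elaborates through
-- the `HMul` instance of `CStarMatrix` and the `Matrix` lemmas no longer apply.

theorem conjTranspose_embedVec_mul_mul_embedVec (v : m → ℂ) (M : Matrix (m × d) (m × d) ℂ) :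
    (embedVec (d := d) v)ᴴ * M * embedVec (d := d) v =
      of fun x y => ∑ s, ∑ t, star (v s) * M (s, x) (t, y) * v t := by
  ext x y
  simp only [mul_apply, conjTranspose_apply, embedVec, of_apply, Fintype.sum_prod_type,
    apply_ite star, star_zero, mul_ite, ite_mul, mul_one, mul_zero, zero_mul,
    Finset.sum_ite_eq', Finset.mem_univ, if_true, Finset.sum_mul]
  rw [Finset.sum_comm]

theorem conjTranspose_embedVec_mul_kronecker_mul_embedVec (v : m → ℂ) (P : Matrix m m ℂ)
    (A : Matrix d d ℂ) :
    (embedVec (d := d) v)ᴴ * (P ⊗ₖ A) * embedVec (d := d) v = (star v ⬝ᵥ P *ᵥ v) • A := by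
  ext x y
  simp only [conjTranspose_embedVec_mul_mul_embedVec, of_apply, kroneckerMap_apply,
    Matrix.smul_apply, smul_eq_mul, dotProduct, mulVec, Pi.star_apply, Finset.mul_sum,
    Finset.sum_mul]
  refine Finset.sum_congr rfl fun s _ => Finset.sum_congr rfl fun t _ => ?_
  ring

theorem conjTranspose_embedVec_mul_embedVec [DecidableEq m] (v : m → ℂ) :
    (embedVec (d := d) v)ᴴ * embedVec (d := d) v = (star v ⬝ᵥ v) • (1 : Matrix d d ℂ) := by
  have h := conjTranspose_embedVec_mul_kronecker_mul_embedVec (d := d) v 1 1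
  rwa [one_kronecker_one, Matrix.mul_one, one_mulVec] at h

end Compression

theorem prod_single_apply {ι : Type*} [Fintype ι] {κ : ι → Type*} [∀ i, DecidableEq (κ i)]
    (i j a b : ∀ γ, κ γ) (c : ι → ℂ) :
    ∏ γ, single (i γ) (j γ) (c γ) (a γ) (b γ) = single i j (∏ γ, c γ) a b := by
  simp only [single_apply, Fintype.prod_ite_zero, funext_iff, forall_and]

open Complex in
theorem two_sin_half_mul_exp (φ : ℝ) :
    ((2 * Real.sin (φ / 2) : ℝ) : ℂ) * exp (I * ((3 * Real.pi / 2 - φ / 2 : ℝ) : ℂ)) =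
      exp (-I * φ) - 1 := by
  have hω : exp (I * ((3 * Real.pi / 2 - φ / 2 : ℝ) : ℂ)) = -I * exp (-(φ / 2) * I) := by
    rw [show I * ((3 * Real.pi / 2 - φ / 2 : ℝ) : ℂ) =
        Real.pi * I + Real.pi / 2 * I + -(φ / 2) * I by push_cast; ring,
      exp_add, exp_add, exp_pi_mul_I, exp_pi_div_two_mul_I]
    ring
  have hexp : exp (-I * φ) = exp (-(φ / 2) * I) * exp (-(φ / 2) * I) := by
    rw [← exp_add]; ring_nf
  have hinv : exp ((φ / 2) * I) * exp (-(φ / 2) * I) = 1 := by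
    rw [← exp_add]; simp
  rw [hω, hexp, ofReal_mul, ofReal_sin, sin]
  push_cast
  linear_combination (exp (-(φ / 2) * I) * (exp ((φ / 2) * I) - exp (-(φ / 2) * I))) * I_sq - hinv

section ControlQubit

variable {φ : ℝ}

theorem star_ctrlQubitState_false_mul (h : 0 ≤ 1 + 2 * Real.sin (φ / 2)) :
    star (ctrlQubitState φ false) * ctrlQubitState φ false =
      (((1 + 2 * Real.sin (φ / 2) : ℝ) : ℂ))⁻¹ := by
  simp only [ctrlQubitState, Bool.false_eq_true, if_false, Complex.star_def, Complex.conj_ofReal]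
  rw [← Complex.ofReal_mul, ← mul_inv, Real.mul_self_sqrt h, Complex.ofReal_inv]

theorem star_ctrlQubitState_true_mul (hs : 0 ≤ Real.sin (φ / 2)) :
    star (ctrlQubitState φ true) * ctrlQubitState φ true =
      ((2 * Real.sin (φ / 2) : ℝ) : ℂ) * (((1 + 2 * Real.sin (φ / 2) : ℝ) : ℂ))⁻¹ := by
  simp only [ctrlQubitState, if_true, Complex.star_def, Complex.conj_ofReal]
  rw [← Complex.ofReal_mul, div_mul_div_comm, Real.mul_self_sqrt (by linarith),
    Real.mul_self_sqrt (by linarith), Complex.ofReal_div, div_eq_mul_inv]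

end ControlQubit

section DistributedReflection

variable (Γ : ℕ) (d : Fin (Γ + 1) → ℕ) (hd : ∀ γ, 0 < d γ)

theorem locRefl_add_one (γ : Fin (Γ + 1)) :
    locRefl Γ d hd γ + 1 = single ⟨0, hd γ⟩ ⟨0, hd γ⟩ 2 := by
  rw [locRefl, sub_add_cancel, smul_single, smul_eq_mul, mul_one]

theorem dRefl_eq (φ : ℝ) :
    dRefl Γ d hd φ = 1 + (Complex.exp (-Complex.I * φ) - 1) •
      single (fun γ => (⟨0, hd γ⟩ : Fin (d γ))) (fun γ => ⟨0, hd γ⟩) 1 := by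
  rw [dRefl, sub_eq_add_neg, ← neg_smul, neg_sub]

theorem ctrlLocRefl_apply (s t : Fin (Γ + 1) → Bool) (a b : ∀ γ, Fin (d γ)) :
    ctrlLocRefl Γ d hd (s, a) (t, b) =
      if s = t then
        ∏ γ, if s γ then locRefl Γ d hd γ (a γ) (b γ) else (1 : Matrix _ _ ℂ) (a γ) (b γ)
      else 0 := by
  simp only [ctrlLocRefl, of_apply, one_apply, Finset.prod_mul_distrib, Fintype.prod_boole,
    ← funext_iff]
  rw [ite_mul, one_mul, zero_mul]

theorem sum_prod_ite_locRefl_apply (a b : ∀ γ, Fin (d γ)) :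
    ∑ s : Fin (Γ + 1) → Bool,
        ∏ γ, (if s γ then locRefl Γ d hd γ (a γ) (b γ) else (1 : Matrix _ _ ℂ) (a γ) (b γ)) =
      single (fun γ => (⟨0, hd γ⟩ : Fin (d γ))) (fun γ => ⟨0, hd γ⟩) (2 ^ (Γ + 1)) a b := by
  rw [← Fintype.prod_sum fun γ (c : Bool) =>
    if c then locRefl Γ d hd γ (a γ) (b γ) else (1 : Matrix _ _ ℂ) (a γ) (b γ)]
  simp only [Fintype.sum_bool, if_true, Bool.false_eq_true, if_false, ← Matrix.add_apply,
    locRefl_add_one, prod_single_apply, Finset.prod_const, Finset.card_univ, Fintype.card_fin]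

theorem star_plusState_mul_plusState (s t : Fin (Γ + 1) → Bool) :
    star (plusState Γ s) * plusState Γ t = ((2 : ℂ) ^ (Γ + 1))⁻¹ := by
  simp only [plusState, Complex.star_def, Complex.conj_ofReal, ← Complex.ofReal_mul, ← mul_pow,
    ← mul_inv, Real.mul_self_sqrt zero_le_two]
  push_cast
  exact inv_pow _ _

theorem star_plusState_dotProduct_plusState : star (plusState Γ) ⬝ᵥ plusState Γ = 1 := by
  simp only [dotProduct, Pi.star_apply, star_plusState_mul_plusState, Finset.sum_const,
    Finset.card_univ, Fintype.card_fun, Fintype.card_bool, Fintype.card_fin, nsmul_eq_mul]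
  push_cast
  exact mul_inv_cancel₀ (pow_ne_zero _ two_ne_zero)

theorem conjTranspose_embedVec_mul_ctrlLocRefl_mul_embedVec_plusState :
    (embedVec (d := ∀ γ, Fin (d γ)) (plusState Γ))ᴴ * ctrlLocRefl Γ d hd *
        embedVec (d := ∀ γ, Fin (d γ)) (plusState Γ) =
      single (fun γ => (⟨0, hd γ⟩ : Fin (d γ))) (fun γ => ⟨0, hd γ⟩) 1 := by
  ext a b
  rw [conjTranspose_embedVec_mul_mul_embedVec, of_apply]
  simp only [ctrlLocRefl_apply, mul_ite, ite_mul, mul_zero, zero_mul, Finset.sum_ite_eq,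
    Finset.mem_univ, if_true, mul_right_comm _ _ (plusState Γ _), star_plusState_mul_plusState,
    ← Finset.mul_sum, sum_prod_ite_locRefl_apply, single_apply]
  split_ifs <;> simp

theorem dReflSelect_mul_phaseGate (φ : ℝ) :
    dReflSelect Γ d hd * phaseGate Γ d φ =
      single false false 1 ⊗ₖ 1 +
        single true true (Complex.exp (Complex.I * ((3 * Real.pi / 2 - φ / 2 : ℝ) : ℂ))) ⊗ₖ
          ctrlLocRefl Γ d hd := by
  rw [dReflSelect, phaseGate, Matrix.add_mul, ← mul_kronecker_mul, ← mul_kronecker_mul,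
    Matrix.one_mul, Matrix.mul_one]
  congr 2 <;> ext (_ | _) (_ | _) <;> simp [mul_apply, single_apply]

theorem conjTranspose_embedVec_mul_dReflSelect_mul_phaseGate_mul_embedVec
    {φ : ℝ} (hs : 0 ≤ Real.sin (φ / 2)) :
    (embedVec (d := (Fin (Γ + 1) → Bool) × (∀ γ, Fin (d γ))) (ctrlQubitState φ))ᴴ *
        (dReflSelect Γ d hd * phaseGate Γ d φ) *
        embedVec (d := (Fin (Γ + 1) → Bool) × (∀ γ, Fin (d γ))) (ctrlQubitState φ) =
      (((1 + 2 * Real.sin (φ / 2) : ℝ) : ℂ))⁻¹ •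
        (1 + (Complex.exp (-Complex.I * φ) - 1) • ctrlLocRefl Γ d hd) := by
  rw [dReflSelect_mul_phaseGate, Matrix.mul_add, Matrix.add_mul,
    conjTranspose_embedVec_mul_kronecker_mul_embedVec,
    conjTranspose_embedVec_mul_kronecker_mul_embedVec, ← two_sin_half_mul_exp]
  simp only [single_mulVec_eq, dotProduct_smul, dotProduct_single, Pi.star_apply, mul_one,
    smul_eq_mul, mul_comm _ (star _), one_mul, mul_left_comm (star (ctrlQubitState φ true))]
  rw [star_ctrlQubitState_false_mul (by linarith), star_ctrlQubitState_true_mul hs]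
  module

end DistributedReflection

/-- Distributed reflection via nested LCU: compressing `select(U_R) · U_φ` by the
prepared ancilla state `u ⊗ |+⟩^{⊗(Γ+1)}` block-encodes the distributed reflection `R`
with normalization `1 + 2 sin(φ/2)`. -/
theorem distributed_reflection (Γ : ℕ) (d : Fin (Γ + 1) → ℕ) (hd : ∀ γ, 0 < d γ)
    (φ : ℝ) (hφ0 : 0 ≤ φ) (hφ : φ ≤ Real.pi / 2) :
    (embedVec (d := ∀ γ, Fin (d γ)) (plusState Γ))ᴴ *
        ((embedVec (d := (Fin (Γ + 1) → Bool) × (∀ γ, Fin (d γ))) (ctrlQubitState φ))ᴴ *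
          (dReflSelect Γ d hd * phaseGate Γ d φ) *
          embedVec (d := (Fin (Γ + 1) → Bool) × (∀ γ, Fin (d γ))) (ctrlQubitState φ)) *
        embedVec (d := ∀ γ, Fin (d γ)) (plusState Γ) =
      (((1 + 2 * Real.sin (φ / 2) : ℝ) : ℂ))⁻¹ • dRefl Γ d hd φ := by
  have hs : 0 ≤ Real.sin (φ / 2) :=
    Real.sin_nonneg_of_nonneg_of_le_pi (by linarith) (by linarith [Real.pi_pos])
  rw [conjTranspose_embedVec_mul_dReflSelect_mul_phaseGate_mul_embedVec Γ d hd hs, dRefl_eq]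
  simp only [Matrix.mul_smul, Matrix.smul_mul, Matrix.mul_add, Matrix.add_mul, Matrix.mul_one,
    conjTranspose_embedVec_mul_embedVec, star_plusState_dotProduct_plusState, one_smul,
    conjTranspose_embedVec_mul_ctrlLocRefl_mul_embedVec_plusState]
end
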